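/- Let G be a group with a finite generating set S. For every integer m ≥ 0 there exists an integer M ≥ 0 such that: for all x, y, z ∈ S ∪ S⁻¹ generating a copy of ℤ³ and every v ∈ G with |v| > M, if there exists n ≥ 0 with |v x^n| ≤ m, then |v x^i y^j z^k| > m for all integers i ≤ 0 and all j, k ∈ ℤ. (That is, if the ray v·r_x meets St^m(∗), then the half-space v·R(x⁻,y,z) = {v x^i y^j z^k : i ≤ 0} is disjoint from St^m(∗).) -/
import Mathlib


/-- The word length of `g` with respect to the generating set `S`: the least `n` such that
`g` is a product of `n` elements of `S ∪ S⁻¹` (so the word length of `1` is `0`). -/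
noncomputable def wordLength {G : Type*} [Group G] (S : Set G) (g : G) : ℕ :=
  sInf {n : ℕ | ∃ l : List G, l.length = n ∧ (∀ x ∈ l, x ∈ S ∪ S⁻¹) ∧ l.prod = g}

/-- `x`, `y` and `z` generate a copy of `ℤ³`: they pairwise commute and the homomorphism
`ℤ³ → G` sending `(i, j, k)` to `x^i * y^j * z^k` is injective. -/
def GeneratesZcube {G : Type*} [Group G] (x y z : G) : Prop :=
  Commute x y ∧ Commute x z ∧ Commute y z ∧
    Function.Injective (fun p : ℤ × ℤ × ℤ => x ^ p.1 * y ^ p.2.1 * z ^ p.2.2)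

section Aux

variable {G : Type*} [Group G] {S : Set G}

lemma symm_mem_inv {x : G} (hx : x ∈ S ∪ S⁻¹) : x⁻¹ ∈ S ∪ S⁻¹ := by
  rcases hx with h | h
  · exact Or.inr (by simpa [Set.mem_inv] using h)
  · exact Or.inl (by simpa [Set.mem_inv] using h)

lemma exists_word (hSgen : Subgroup.closure S = ⊤) (g : G) :
    ∃ l : List G, (∀ x ∈ l, x ∈ S ∪ S⁻¹) ∧ l.prod = g := by
  have hg : g ∈ Subgroup.closure S := hSgen ▸ Subgroup.mem_top g
  have hg' : g ∈ Submonoid.closure (S ∪ S⁻¹) := by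
    rw [← Subgroup.closure_toSubmonoid]; exact hg
  exact Submonoid.exists_list_of_mem_closure hg'

lemma wl_nonempty (hSgen : Subgroup.closure S = ⊤) (g : G) :
    {n : ℕ | ∃ l : List G, l.length = n ∧ (∀ x ∈ l, x ∈ S ∪ S⁻¹) ∧ l.prod = g}.Nonempty := by
  obtain ⟨l, h1, h2⟩ := exists_word hSgen g
  exact ⟨l.length, l, rfl, h1, h2⟩

lemma wordLength_spec (hSgen : Subgroup.closure S = ⊤) (g : G) :
    ∃ l : List G, l.length = wordLength S g ∧ (∀ x ∈ l, x ∈ S ∪ S⁻¹) ∧ l.prod = g :=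
  Nat.sInf_mem (wl_nonempty hSgen g)

lemma wordLength_le_of_list {g : G} (l : List G) (hl : ∀ x ∈ l, x ∈ S ∪ S⁻¹)
    (hp : l.prod = g) : wordLength S g ≤ l.length :=
  Nat.sInf_le ⟨l, rfl, hl, hp⟩

lemma wordLength_mul_le (hSgen : Subgroup.closure S = ⊤) (a b : G) :
    wordLength S (a * b) ≤ wordLength S a + wordLength S b := by
  obtain ⟨la, hla, hla2, hla3⟩ := wordLength_spec hSgen a
  obtain ⟨lb, hlb, hlb2, hlb3⟩ := wordLength_spec hSgen b
  have := wordLength_le_of_list (S := S) (la ++ lb)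
    (by intro x hx; rcases List.mem_append.1 hx with h | h; exacts [hla2 x h, hlb2 x h])
    (by rw [List.prod_append, hla3, hlb3])
  simpa [hla, hlb] using this

lemma wordLength_inv_le (hSgen : Subgroup.closure S = ⊤) (a : G) :
    wordLength S a⁻¹ ≤ wordLength S a := by
  obtain ⟨la, hla, hla2, hla3⟩ := wordLength_spec hSgen a
  have := wordLength_le_of_list (S := S) ((la.map (·⁻¹)).reverse)
    (by
      intro x hx
      simp only [List.mem_reverse, List.mem_map] at hx
      obtain ⟨y, hy, rfl⟩ := hx
      exact symm_mem_inv (hla2 y hy))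
    (by rw [← List.prod_inv_reverse, hla3])
  simpa [hla] using this

lemma wordLength_pow_le {x : G} (hx : x ∈ S ∪ S⁻¹) (n : ℕ) :
    wordLength S (x ^ n) ≤ n := by
  have := wordLength_le_of_list (S := S) (List.replicate n x)
    (by intro y hy; rw [List.eq_of_mem_replicate hy]; exact hx)
    (List.prod_replicate n x)
  simpa using this

lemma ball_finite (hSfin : S.Finite) (hSgen : Subgroup.closure S = ⊤) (r : ℕ) :
    {g : G | wordLength S g ≤ r}.Finite := by
  have hT : (S ∪ S⁻¹).Finite := hSfin.union hSfin.inv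
  haveI : Finite (S ∪ S⁻¹ : Set G) := hT.to_subtype
  have hfin : {l : List (S ∪ S⁻¹ : Set G) | l.length ≤ r}.Finite :=
    List.finite_length_le _ r
  have : {g : G | wordLength S g ≤ r} ⊆
      (fun l : List (S ∪ S⁻¹ : Set G) => (l.map Subtype.val).prod) ''
        {l | l.length ≤ r} := by
    intro g hg
    obtain ⟨l, hl1, hl2, hl3⟩ := wordLength_spec hSgen g
    refine ⟨l.attachWith _ hl2, by simpa [hl1] using hg, ?_⟩
    simp only [List.attachWith_map_subtype_val]
    exact hl3
  exact (hfin.image _).subset this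

end Aux

/-- Lemma 3.3: if `v` is far from the identity and the ray `v·r_x` meets the ball of radius
`m` about the identity, then the half-space `v·R(x⁻,y,z)` avoids that ball. -/
theorem wordLength_halfSpace_of_ray {G : Type*} [Group G] (S : Set G) (hSfin : S.Finite)
    (hSgen : Subgroup.closure S = ⊤) :
    ∀ m : ℕ, ∃ M : ℕ,
      ∀ x ∈ S ∪ S⁻¹, ∀ y ∈ S ∪ S⁻¹, ∀ z ∈ S ∪ S⁻¹, GeneratesZcube x y z →
        ∀ v : G, M < wordLength S v →
          (∃ n : ℕ, wordLength S (v * x ^ (n : ℤ)) ≤ m) →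
            ∀ i : ℤ, i ≤ 0 → ∀ j k : ℤ,
              m < wordLength S (v * x ^ i * y ^ j * z ^ k) := by
  intro m
  set T : Set G := S ∪ S⁻¹ with hTdef
  have hT : T.Finite := hSfin.union hSfin.inv
  set B : Set G := {g | wordLength S g ≤ m + m} with hBdef
  have hBfin : B.Finite := ball_finite hSfin hSgen (m + m)
  set A : Set (ℤ × ℤ × ℤ) := {p | ∃ x ∈ T, ∃ y ∈ T, ∃ z ∈ T,
    GeneratesZcube x y z ∧ x ^ p.1 * y ^ p.2.1 * z ^ p.2.2 ∈ B} with hAdef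
  have hA : A.Finite := by
    have hQ : {q : G × G × G | q ∈ (T ×ˢ T ×ˢ T : Set _) ∧
        GeneratesZcube q.1 q.2.1 q.2.2}.Finite :=
      ((hT.prod (hT.prod hT)).subset (fun q hq => hq.1))
    have hsub : A ⊆ ⋃ q ∈ {q : G × G × G | q ∈ (T ×ˢ T ×ˢ T : Set _) ∧
        GeneratesZcube q.1 q.2.1 q.2.2},
        (fun p : ℤ × ℤ × ℤ => q.1 ^ p.1 * q.2.1 ^ p.2.1 * q.2.2 ^ p.2.2) ⁻¹' B := by
      rintro p ⟨x, hx, y, hy, z, hz, hxyz, hpB⟩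
      exact Set.mem_biUnion (show ((x, y, z) : G × G × G) ∈ _ from ⟨⟨hx, hy, hz⟩, hxyz⟩) hpB
    refine Set.Finite.subset (Set.Finite.biUnion hQ ?_) hsub
    rintro ⟨x, y, z⟩ ⟨-, hxyz⟩
    exact hBfin.preimage (hxyz.2.2.2.injOn)
  obtain ⟨C, hC⟩ : ∃ C : ℕ, ∀ p ∈ A, p.1.natAbs ≤ C := by
    obtain ⟨C, hC⟩ := (hA.image (fun p => p.1.natAbs)).bddAbove
    exact ⟨C, fun p hp => hC ⟨p, hp, rfl⟩⟩
  refine ⟨m + C, ?_⟩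
  intro x hx y hy z hz hxyz v hv ⟨n, hn⟩ i hi j k
  by_contra h
  push_neg at h
  -- the difference lies in the ball of radius 2m
  have hdiff : x ^ (i - (n : ℤ)) * y ^ j * z ^ k =
      (v * x ^ (n : ℤ))⁻¹ * (v * x ^ i * y ^ j * z ^ k) := by
    group
  have hmem : x ^ (i - (n : ℤ)) * y ^ j * z ^ k ∈ B := by
    rw [hBdef, Set.mem_setOf_eq, hdiff]
    calc wordLength S ((v * x ^ (n : ℤ))⁻¹ * (v * x ^ i * y ^ j * z ^ k)) ≤
        wordLength S (v * x ^ (n : ℤ))⁻¹ + wordLength S (v * x ^ i * y ^ j * z ^ k) :=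
          wordLength_mul_le hSgen _ _
      _ ≤ m + m :=
          add_le_add (le_trans (wordLength_inv_le hSgen _) hn) h
  have hpA : ((i - (n : ℤ), j, k) : ℤ × ℤ × ℤ) ∈ A :=
    ⟨x, hx, y, hy, z, hz, hxyz, hmem⟩
  have hnC : n ≤ C := by
    have := hC _ hpA
    simp only at this
    omega
  -- v is within m + n of the identity
  have hvle : wordLength S v ≤ m + n := by
    have hveq : v = (v * x ^ (n : ℤ)) * (x⁻¹) ^ n := by
      rw [inv_pow, ← zpow_natCast x n]; group
    calc wordLength S v = wordLength S ((v * x ^ (n : ℤ)) * (x⁻¹) ^ n) := by rw [← hveq]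
      _ ≤ wordLength S (v * x ^ (n : ℤ)) + wordLength S ((x⁻¹) ^ n) :=
          wordLength_mul_le hSgen _ _
      _ ≤ m + n := add_le_add hn (wordLength_pow_le (symm_mem_inv hx) n)
  omega
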